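/- arXiv:1808.07438 — 3 statements merged into one kernel-verified Lean document; each statement's English description precedes it below -/
import Mathlib

section
/- The set S = { t • (1, 7, 7², 7³, 7⁴) : t ∈ ℤ/382ℤ } ⊆ (ℤ/382ℤ)⁵ is an independent set in the fifth strong product power of the circular graph C_{108,382}. Equivalently, for every nonzero t ∈ ℤ/382ℤ there exists an index i ∈ {0,1,2,3,4} such that the representative of t·7^i in {0,…,381} lies in the interval [108, 274]. -/
/-- Circular distance between two elements of `ZMod n`. -/
def cyclicDist (n : ℕ) (a b : ZMod n) : ℕ := min (a - b).val (b - a).val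

/-- The circular graph `C_{k,n}` on `ZMod n`: distinct vertices are adjacent
iff their circular distance is strictly less than `k`. -/
def circularGraph (k n : ℕ) : SimpleGraph (ZMod n) where
  Adj u v := u ≠ v ∧ cyclicDist n u v < k
  symm := by
    constructor
    rintro u v ⟨h1, h2⟩
    exact ⟨h1.symm, by simpa [cyclicDist, min_comm] using h2⟩
  loopless := by constructor; rintro u ⟨h, _⟩; exact h rfl

/-- The `d`-th strong product power of a graph. -/
def strongPower {V : Type*} (G : SimpleGraph V) (d : ℕ) : SimpleGraph (Fin d → V) where
  Adj x y := x ≠ y ∧ ∀ i, x i = y i ∨ G.Adj (x i) (y i)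
  symm := by
    constructor
    rintro x y ⟨h1, h2⟩
    exact ⟨h1.symm, fun i => (h2 i).imp Eq.symm (fun h => G.adj_symm h)⟩
  loopless := by constructor; rintro x ⟨h, _⟩; exact h rfl

/-- A set of vertices is independent if no two of its elements are adjacent. -/
def IsIndep {V : Type*} (G : SimpleGraph V) (s : Set V) : Prop :=
  ∀ u ∈ s, ∀ v ∈ s, u ≠ v → ¬ G.Adj u v

/-- The independence number of a graph on a finite vertex set. -/
noncomputable def alpha {V : Type*} [Fintype V] (G : SimpleGraph V) : ℕ :=
  sSup {m | ∃ s : Finset V, IsIndep G ↑s ∧ s.card = m}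

/-- The Shannon capacity of a graph. -/
noncomputable def shannonCapacity {V : Type*} [Fintype V] (G : SimpleGraph V) : ℝ :=
  ⨆ d : ℕ+, (alpha (strongPower G d) : ℝ) ^ ((1 : ℝ) / (d : ℝ))

/-! The circular graph is translation invariant, so distinct multiples `t • g` and `s • g` are
adjacent in the strong power only if every coordinate of `(t - s) • g` is `0` or adjacent to `0`.
For `g = (7 ^ i)ᵢ` in `ℤ/382ℤ` it remains to check, for each of the 381 nonzero `u`, that some
`u * 7 ^ i` is at circular distance at least `108` from `0`: a finite computation. -/

lemma circularGraph_adj_iff_sub_adj_zero {k n : ℕ} {a b : ZMod n} :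
    (circularGraph k n).Adj a b ↔ (circularGraph k n).Adj (a - b) 0 := by
  simp [circularGraph, cyclicDist, sub_ne_zero]

lemma not_eq_zero_or_adj_zero_of_le_cyclicDist {k n : ℕ} {x : ZMod n} (hk : 0 < k)
    (hx : k ≤ cyclicDist n x 0) : ¬ (x = 0 ∨ (circularGraph k n).Adj x 0) := by
  rintro (rfl | ⟨-, hlt⟩)
  · simp [cyclicDist] at hx
    omega
  · omega

lemma isIndep_strongPower_multiples {k n d : ℕ} (g : Fin d → ZMod n)
    (hg : ∀ u : ZMod n, u ≠ 0 → ∃ i, ¬ (u * g i = 0 ∨ (circularGraph k n).Adj (u * g i) 0)) :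
    IsIndep (strongPower (circularGraph k n) d) {x | ∃ t : ZMod n, x = fun i => t * g i} := by
  rintro _ ⟨t, rfl⟩ _ ⟨s, rfl⟩ hne ⟨-, hadj⟩
  have hts : t - s ≠ 0 := fun h => hne (by rw [sub_eq_zero.mp h])
  obtain ⟨i, hi⟩ := hg _ hts
  rw [sub_mul] at hi
  exact hi ((hadj i).imp sub_eq_zero.mpr circularGraph_adj_iff_sub_adj_zero.mp)

set_option maxRecDepth 10000 in
lemma le_cyclicDist_mul_pow_seven :
    ∀ u : ZMod 382, u ≠ 0 → ∃ i : Fin 5, 108 ≤ cyclicDist 382 (u * 7 ^ (i : ℕ)) 0 := by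
  decide

theorem stmt0 :
    IsIndep (strongPower (circularGraph 108 382) 5)
      {x : Fin 5 → ZMod 382 | ∃ t : ZMod 382, x = fun i : Fin 5 => t * 7 ^ (i : ℕ)} := by
  refine isIndep_strongPower_multiples _ fun u hu => ?_
  obtain ⟨i, hi⟩ := le_cyclicDist_mul_pow_seven u hu
  exact ⟨i, not_eq_zero_or_adj_zero_of_le_cyclicDist (by norm_num) hi⟩
end

section
/- For every nonzero t ∈ ℤ/382ℤ there exists i ∈ {0,1,2,3,4} such that the canonical representative of t·7^i in {0,1,…,381} lies in [108, 274]. -/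
theorem stmt1 (t : ZMod 382) (ht : t ≠ 0) :
    ∃ i : Fin 5, (t * 7 ^ (i : ℕ)).val ∈ Set.Icc 108 274 := by
  revert t
  decide +kernel
end

section
/- For integers k, k', n, n' with n ≥ 2k, n' ≥ 2k', and n'·k ≤ n·k', and for every positive integer d, the independence number of the d-th strong product power satisfies α(C_{k',n'}^d) ≤ α(C_{k,n}^d). -/
/-!
A map `f` with `Gᶜ →g Hᶜ` sends independent sets of `G` (cliques of `Gᶜ`) injectively to
independent sets of `H`, and applying it coordinatewise gives such a map between strong powers,
since two tuples are non-adjacent in the strong power exactly when some coordinate pair is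
non-adjacent. For circular graphs, `x ↦ ⌊x n / n'⌋` is such a map: a circular gap of at least `k'`
in `ℤ/n'ℤ` becomes a gap of at least `k' n / n' ≥ k` in `ℤ/nℤ`.
-/

open Finset

namespace SimpleGraph

variable {V W : Type*} {G : SimpleGraph V} {H : SimpleGraph W}

theorem IsClique.injOn_hom {s : Set V} (hs : G.IsClique s) (f : G →g H) : Set.InjOn f s :=
  fun _ hx _ hy hxy => by_contra fun hne => (f.map_adj (hs hx hy hne)).ne hxy

theorem IsClique.image_hom {s : Set V} (hs : G.IsClique s) (f : G →g H) :
    H.IsClique (f '' s) := by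
  rintro _ ⟨x, hx, rfl⟩ _ ⟨y, hy, rfl⟩ hne
  exact f.map_adj (hs hx hy fun h => hne (congrArg f h))

theorem cliqueNum_le_of_hom [Finite W] (f : G →g H) : G.cliqueNum ≤ H.cliqueNum := by
  classical
  obtain ⟨s, hs⟩ := G.exists_isNClique_cliqueNum
  have himage : H.IsClique (s.image f : Set W) := by
    rw [coe_image]; exact hs.isClique.image_hom f
  calc G.cliqueNum = #(s.image f) := by
        rw [card_image_of_injOn (hs.isClique.injOn_hom f), hs.card_eq]
    _ ≤ H.cliqueNum := himage.card_le_cliqueNum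

theorem indepNum_le_of_hom_compl [Finite W] (f : Gᶜ →g Hᶜ) : G.indepNum ≤ H.indepNum := by
  simpa only [cliqueNum_compl] using cliqueNum_le_of_hom f

end SimpleGraph

theorem alpha_eq_indepNum {V : Type*} [Fintype V] (G : SimpleGraph V) : alpha G = G.indepNum := by
  simp only [alpha, SimpleGraph.indepNum, SimpleGraph.isNIndepSet_iff]
  rfl

theorem strongPower_compl_adj {V : Type*} (G : SimpleGraph V) (d : ℕ) {x y : Fin d → V} :
    (strongPower G d)ᶜ.Adj x y ↔ ∃ i, Gᶜ.Adj (x i) (y i) := by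
  simp only [SimpleGraph.compl_adj, strongPower, ne_eq, not_and, not_forall, not_or]
  constructor
  · rintro ⟨hne, h⟩; exact h hne
  · rintro ⟨i, hi, hadj⟩
    exact ⟨fun h => hi (congrFun h i), fun _ => ⟨i, hi, hadj⟩⟩

def strongPowerComplHom {V W : Type*} {G : SimpleGraph V} {H : SimpleGraph W}
    (f : Gᶜ →g Hᶜ) (d : ℕ) : (strongPower G d)ᶜ →g (strongPower H d)ᶜ where
  toFun x := f ∘ x
  map_rel' h := by
    obtain ⟨i, hi⟩ := (strongPower_compl_adj G d).1 h
    exact (strongPower_compl_adj H d).2 ⟨i, f.map_adj hi⟩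


theorem Nat.mul_div_add_le_mul_div {k k' n n' a b : ℕ} (hn' : 0 < n')
    (hratio : n' * k ≤ n * k') (hab : b + k' ≤ a) : b * n / n' + k ≤ a * n / n' := by
  have hk : k ≤ (a - b) * n / n' := by
    rw [Nat.le_div_iff_mul_le hn']
    calc k * n' = n' * k := Nat.mul_comm k n'
      _ ≤ n * k' := hratio
      _ ≤ n * (a - b) := Nat.mul_le_mul_left n (by omega)
      _ = (a - b) * n := Nat.mul_comm n (a - b)
  calc b * n / n' + k ≤ b * n / n' + (a - b) * n / n' := by omega
    _ ≤ (b * n + (a - b) * n) / n' := Nat.div_add_div_le_add_div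
    _ = a * n / n' := by rw [← Nat.add_mul, Nat.add_sub_cancel' (by omega)]

section Circular

variable {k k' n n' : ℕ}

theorem cyclicDist_self (a : ZMod n) : cyclicDist n a a = 0 := by
  simp [cyclicDist]

theorem cyclicDist_of_val_le [NeZero n] {a b : ZMod n} (h : b.val ≤ a.val) :
    cyclicDist n a b = min (a.val - b.val) (n - (a.val - b.val)) := by
  obtain rfl | hne := eq_or_ne a b
  · simp [cyclicDist]
  have : NeZero (a - b) := ⟨sub_ne_zero.2 hne⟩
  rw [cyclicDist, ← neg_sub a b, ZMod.val_neg_of_ne_zero, ZMod.val_sub h]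

theorem le_cyclicDist_iff [NeZero n] {a b : ZMod n} (h : b.val ≤ a.val) :
    k ≤ cyclicDist n a b ↔ b.val + k ≤ a.val ∧ a.val + k ≤ b.val + n := by
  rw [cyclicDist_of_val_le h, le_min_iff]
  have := a.val_lt
  omega

theorem circularGraph_compl_adj {u v : ZMod n} :
    (circularGraph k n)ᶜ.Adj u v ↔ u ≠ v ∧ k ≤ cyclicDist n u v := by
  simp only [SimpleGraph.compl_adj, circularGraph, ne_eq, not_and, not_lt]
  tauto

def circularScale (n n' : ℕ) (x : ZMod n') : ZMod n := ((x.val * n / n' : ℕ) : ZMod n)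

theorem circularScale_val [NeZero n] [NeZero n'] (x : ZMod n') :
    (circularScale n n' x).val = x.val * n / n' := by
  refine ZMod.val_cast_of_lt ((Nat.div_lt_iff_lt_mul (NeZero.pos n')).2 ?_)
  rw [Nat.mul_comm n n']
  exact Nat.mul_lt_mul_of_pos_right x.val_lt (NeZero.pos n)

theorem circularScale_compl_adj [NeZero n] [NeZero n'] (hk : 0 < k)
    (hratio : n' * k ≤ n * k') {u v : ZMod n'} (h : (circularGraph k' n')ᶜ.Adj u v) :
    (circularGraph k n)ᶜ.Adj (circularScale n n' u) (circularScale n n' v) := by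
  wlog hle : v.val ≤ u.val generalizing u v
  · exact (this h.symm (le_of_not_ge hle)).symm
  have hn' : 0 < n' := NeZero.pos n'
  rw [circularGraph_compl_adj, le_cyclicDist_iff hle] at h
  have hscale : (circularScale n n' v).val ≤ (circularScale n n' u).val := by
    simp only [circularScale_val]
    exact Nat.div_le_div_right (Nat.mul_le_mul_right n hle)
  have hlow := Nat.mul_div_add_le_mul_div hn' hratio h.2.1
  -- the upper bound is the lower bound for the pair `(u, v + n')`, going the other way round
  have hup := Nat.mul_div_add_le_mul_div hn' hratio (a := v.val + n') (b := u.val) (by omega)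
  rw [Nat.add_mul, Nat.add_mul_div_left _ _ hn'] at hup
  have hdist : k ≤ cyclicDist n (circularScale n n' u) (circularScale n n' v) := by
    rw [le_cyclicDist_iff hscale, circularScale_val, circularScale_val]
    omega
  refine circularGraph_compl_adj.2 ⟨fun heq => ?_, hdist⟩
  rw [heq, cyclicDist_self] at hdist
  omega

def circularGraphComplHom [NeZero n] [NeZero n'] (hk : 0 < k) (hratio : n' * k ≤ n * k') :
    (circularGraph k' n')ᶜ →g (circularGraph k n)ᶜ where
  toFun := circularScale n n'
  map_rel' := circularScale_compl_adj hk hratio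

end Circular

theorem stmt10_general (k k' n n' d : ℕ) [NeZero n] [NeZero n'] (hk : 1 ≤ k)
    (hratio : n' * k ≤ n * k') :
    alpha (strongPower (circularGraph k' n') d) ≤ alpha (strongPower (circularGraph k n) d) := by
  rw [alpha_eq_indepNum, alpha_eq_indepNum]
  exact SimpleGraph.indepNum_le_of_hom_compl
    (strongPowerComplHom (circularGraphComplHom hk hratio) d)

theorem stmt10 (k k' n n' d : ℕ) [NeZero n] [NeZero n'] (hk : 1 ≤ k) (hk' : 1 ≤ k')
    (hn : 2 * k ≤ n) (hn' : 2 * k' ≤ n') (hratio : n' * k ≤ n * k') (hd : 0 < d) :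
    alpha (strongPower (circularGraph k' n') d) ≤ alpha (strongPower (circularGraph k n) d) :=
  stmt10_general k k' n n' d hk hratio
end
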